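/- Let A be a T-brace and let a ∈ ζ₂(⋆,A). If a has finite additive order and the additive group of ζ₂(⋆,A) is not periodic, then x ⋆ a ∈ ⟨a ⋆ a⟩ and a ⋆ x ∈ ⟨a ⋆ a⟩ for all elements x ∈ A. -/

import Mathlib

/-!
Basic theory of left braces (skew left braces of abelian type), following
Dixon–Kurdachenko–Subbotin, "On the structure of braces whose subideals are ideals".
-/

universe u v

/-- A left brace: an abelian group `(A,+)`, a group `(A,·)`, satisfying
`a(b+c) = ab + ac - a`.  (The additive and multiplicative identities then coincide.) -/
class LeftBrace (A : Type u) extends AddCommGroup A, Group A where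
  mul_add_eq : ∀ a b c : A, a * (b + c) = a * b + a * c - a

namespace LeftBrace

variable {A : Type u} [LeftBrace A]

/-- The star operation `a ⋆ b = ab - a - b`. -/
def bstar (a b : A) : A := a * b - a - b

/-- A subset of a left brace is a subbrace if it is closed under the additive-group
and multiplicative-group operations (equivalently, it is a left brace under the
restricted operations). -/
structure IsSubbrace (S : Set A) : Prop where
  zero_mem : (0 : A) ∈ S
  add_mem : ∀ {a b : A}, a ∈ S → b ∈ S → a + b ∈ S
  neg_mem : ∀ {a : A}, a ∈ S → -a ∈ S
  mul_mem : ∀ {a b : A}, a ∈ S → b ∈ S → a * b ∈ S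
  inv_mem : ∀ {a : A}, a ∈ S → a⁻¹ ∈ S

/-- `I` is an ideal of the subbrace `J`: `I ⊆ J`, both are subbraces, and
`a ⋆ z, z ⋆ a ∈ I` for all `a ∈ J`, `z ∈ I`. -/
structure IsIdealIn (I J : Set A) : Prop where
  subset : I ⊆ J
  subbrace : IsSubbrace I
  ambient_subbrace : IsSubbrace J
  star_mem_left : ∀ a ∈ J, ∀ z ∈ I, bstar a z ∈ I
  star_mem_right : ∀ a ∈ J, ∀ z ∈ I, bstar z a ∈ I

/-- `I` is an ideal of the brace `A`. -/
def IsIdeal (I : Set A) : Prop := IsIdealIn I (Set.univ : Set A)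

/-- `A` is a T-brace if being an ideal is a transitive relation: an ideal of an
ideal of `A` is an ideal of `A`. -/
def IsTBrace (A : Type u) [LeftBrace A] : Prop :=
  ∀ I J : Set A, IsIdealIn I J → IsIdeal J → IsIdeal I

/-- The `⋆`-center `ζ(⋆,A) = {a | a ⋆ x = x ⋆ a = 0 for all x}`. -/
def starCenter (A : Type u) [LeftBrace A] : Set A :=
  {a : A | ∀ x : A, bstar a x = 0 ∧ bstar x a = 0}

/-- The preimage in `A` of the `⋆`-center of the quotient of `A` by (the ideal) `S`:
`a` belongs to it iff `a ⋆ x ∈ S` and `x ⋆ a ∈ S` for every `x ∈ A`. -/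
def nextCenter (A : Type u) [LeftBrace A] (S : Set A) : Set A :=
  {a : A | ∀ x : A, bstar a x ∈ S ∧ bstar x a ∈ S}

/-- The upper `⋆`-central series, indexed by naturals:
`ζ₀(⋆,A) = 0` and `ζ_{n+1}(⋆,A)/ζ_n(⋆,A) = ζ(⋆, A/ζ_n(⋆,A))`. -/
def zetaNat (A : Type u) [LeftBrace A] : ℕ → Set A
  | 0 => ({0} : Set A)
  | n + 1 => nextCenter A (zetaNat A n)

/-- The upper `⋆`-central series, indexed by ordinals (unions at limit ordinals). -/
noncomputable def zetaOrd (A : Type u) [LeftBrace A] (o : Ordinal.{v}) : Set A :=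
  Ordinal.limitRecOn o (({0} : Set A))
    (fun _ ih => nextCenter A ih)
    (fun o _ ih => ⋃ (o' : Ordinal) (h : o' < o), ih o' h)

/-- The upper `⋆`-hypercenter `ζ_∞(⋆,A)`: the final (stable) term of the upper
`⋆`-central series, i.e. the union of all its terms. -/
noncomputable def starHypercenter (A : Type u) [LeftBrace A] : Set A :=
  ⋃ o : Ordinal.{u}, zetaOrd A o

/-- `A` is `⋆`-hypercentral if `A = ζ_γ(⋆,A)` for some ordinal `γ`. -/
def IsStarHypercentral (A : Type u) [LeftBrace A] : Prop :=
  ∃ γ : Ordinal.{u}, zetaOrd A γ = (Set.univ : Set A)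

/-- `K ⋆ L`: the additive subgroup of `(A,+)` generated by all `x ⋆ y`, `x ∈ K`, `y ∈ L`. -/
def setStar (K L : Set A) : AddSubgroup A :=
  AddSubgroup.closure {z : A | ∃ x ∈ K, ∃ y ∈ L, z = bstar x y}

/-- `rightStarSeries A n = A^{(n+1)}`, where `A^{(1)} = A` and `A^{(n+1)} = A^{(n)} ⋆ A`. -/
def rightStarSeries (A : Type u) [LeftBrace A] : ℕ → Set A
  | 0 => (Set.univ : Set A)
  | n + 1 => ((setStar (rightStarSeries A n) (Set.univ : Set A) : AddSubgroup A) : Set A)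

/-- `leftStarSeries A n = A^{n+1}`, where `A^1 = A` and `A^{n+1} = A ⋆ A^n`. -/
def leftStarSeries (A : Type u) [LeftBrace A] : ℕ → Set A
  | 0 => (Set.univ : Set A)
  | n + 1 => ((setStar (Set.univ : Set A) (leftStarSeries A n) : AddSubgroup A) : Set A)

/-- `A` is Smoktunowicz-nilpotent if `A^{(n)} = A^k = 0` for some naturals `n, k`. -/
def IsSmoktunowiczNilpotent (A : Type u) [LeftBrace A] : Prop :=
  ∃ n k : ℕ, rightStarSeries A n = ({0} : Set A) ∧ leftStarSeries A k = ({0} : Set A)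

/-- The subbrace generated by a subset `M`: the intersection of all subbraces containing `M`. -/
def braceClosure (M : Set A) : Set A := ⋂₀ {S : Set A | IsSubbrace S ∧ M ⊆ S}

end LeftBrace

/-!
For `z ∈ ζ₂(⋆,A)`, the additive subgroup `⟨z⟩ + ζ(⋆,A)` is an ideal of `A` and
`⟨z⟩ + ⟨z ⋆ z⟩` is an ideal of it; in a T-brace the latter is therefore an ideal of `A`, so
`x ⋆ z, z ⋆ x ∈ ⟨z⟩ + ⟨z ⋆ z⟩` for all `x`.

Let `b ∈ ζ₂(⋆,A)` have infinite order. If some nonzero multiple `s` of `b` lies in `ζ(⋆,A)`,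
then `z = s + a` has the same `⋆`-products as `a` but infinite order, and comparing torsion kills
the `⟨z⟩`-component. Otherwise `b` and `a + b` have infinite order modulo `ζ(⋆,A)`, so their
`⋆`-products lie in `⟨b ⋆ b⟩` and `⟨(a + b) ⋆ (a + b)⟩`. Then `b ⋆ b` has infinite order, which
forces `a ⋆ b = b ⋆ a = 0`, and `x ⋆ a = x ⋆ (a + b) - x ⋆ b` splits into a part in `⟨a ⋆ a⟩`
and a torsion part in `⟨b ⋆ b⟩`, which vanishes.
-/

open AddSubgroup

section AddGroup

variable {G : Type*} [AddGroup G]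

theorem IsOfFinAddOrder.of_zsmul {x : G} {n : ℤ} (h : IsOfFinAddOrder (n • x)) (hn : n ≠ 0) :
    IsOfFinAddOrder x := by
  obtain ⟨m, hm, hmx⟩ := isOfFinAddOrder_iff_zsmul_eq_zero.mp h
  exact isOfFinAddOrder_iff_zsmul_eq_zero.mpr ⟨m * n, mul_ne_zero hm hn, by rwa [mul_zsmul]⟩

theorem IsOfFinAddOrder.eq_zero_of_mem_zmultiples {y w : G} (hy : IsOfFinAddOrder y)
    (hw : ¬IsOfFinAddOrder w) (h : y ∈ zmultiples w) : y = 0 := by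
  obtain ⟨k, rfl⟩ := mem_zmultiples_iff.mp h
  by_contra hk
  exact hw (hy.of_zsmul fun h0 => hk (by rw [h0, zero_zsmul]))

end AddGroup

section AddCommGroup

variable {G : Type*} [AddCommGroup G]

theorem QuotientAddGroup.eq_zero_of_zsmul_mem {H : AddSubgroup G} {z : G}
    (hz : ¬IsOfFinAddOrder (z : G ⧸ H)) {p : ℤ} (hp : p • z ∈ H) : p = 0 := by
  by_contra hp0
  refine hz (isOfFinAddOrder_iff_zsmul_eq_zero.mpr ⟨p, hp0, ?_⟩)
  rwa [← QuotientAddGroup.mk_zsmul, QuotientAddGroup.eq_zero_iff]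

theorem not_isOfFinAddOrder_mk_torsion {z : G} (hz : ¬IsOfFinAddOrder z) :
    ¬IsOfFinAddOrder (z : G ⧸ AddCommGroup.torsion G) := by
  rwa [isOfFinAddOrder_iff_eq_zero, QuotientAddGroup.eq_zero_iff, AddCommGroup.mem_torsion]

theorem mem_zmultiples_of_mem_sup_zmultiples {H : AddSubgroup G} {z w y : G}
    (hz : ¬IsOfFinAddOrder (z : G ⧸ H)) (hw : w ∈ H) (hy : y ∈ H)
    (h : y ∈ zmultiples z ⊔ zmultiples w) : y ∈ zmultiples w := by
  obtain ⟨_, hpz, v, hv, rfl⟩ := mem_sup.mp h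
  obtain ⟨p, rfl⟩ := mem_zmultiples_iff.mp hpz
  have hp : p = 0 := QuotientAddGroup.eq_zero_of_zsmul_mem hz <| by
    simpa using sub_mem hy (zmultiples_le.mpr hw hv)
  rwa [hp, zero_zsmul, zero_add]

theorem mem_zmultiples_of_add_mem_zmultiples_add {u w y y' : G} (hu : IsOfFinAddOrder u)
    (hw : ¬IsOfFinAddOrder w) (hy : IsOfFinAddOrder y) (hy' : y' ∈ zmultiples w)
    (h : y + y' ∈ zmultiples (u + w)) : y ∈ zmultiples u := by
  obtain ⟨k, hk⟩ := mem_zmultiples_iff.mp h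
  have hrest : y - k • u ∈ zmultiples w := by
    have hyk : y - k • u = k • w - y' := by
      rw [sub_eq_sub_iff_add_eq_add, ← hk, zsmul_add, add_comm]
    rw [hyk]
    exact sub_mem (zsmul_mem_zmultiples w k) hy'
  have hfin : IsOfFinAddOrder (y - k • u) := by
    rw [sub_eq_add_neg]
    exact hy.add hu.zsmul.neg
  have h0 := hfin.eq_zero_of_mem_zmultiples hw hrest
  exact mem_zmultiples_iff.mpr ⟨k, (sub_eq_zero.mp h0).symm⟩

end AddCommGroup

namespace LeftBrace

variable {A : Type u} [LeftBrace A]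

theorem one_eq_zero : (1 : A) = 0 := by
  have h := mul_add_eq (1 : A) 0 0
  simp only [one_mul, add_zero, zero_sub] at h
  exact neg_eq_zero.mp h.symm

theorem mul_eq_add_add_bstar (a b : A) : a * b = a + b + bstar a b := by
  unfold bstar
  abel

theorem bstar_add_right (a b c : A) : bstar a (b + c) = bstar a b + bstar a c := by
  unfold bstar
  rw [mul_add_eq]
  abel

def bstarHom (a : A) : A →+ A :=
  AddMonoidHom.mk' (bstar a) (bstar_add_right a)

theorem bstar_neg_right (a b : A) : bstar a (-b) = -bstar a b :=
  map_neg (bstarHom a) b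

theorem bstar_zsmul_right (a : A) (m : ℤ) (b : A) : bstar a (m • b) = m • bstar a b :=
  map_zsmul (bstarHom a) m b

theorem bstar_zero_right (a : A) : bstar a 0 = 0 :=
  map_zero (bstarHom a)

theorem bstar_zero_left (a : A) : bstar 0 a = 0 := by
  rw [bstar, ← one_eq_zero, one_mul, one_eq_zero]
  abel

theorem isOfFinAddOrder_bstar_right {a : A} (ha : IsOfFinAddOrder a) (x : A) :
    IsOfFinAddOrder (bstar x a) :=
  (bstarHom x).isOfFinAddOrder ha

theorem bstar_mul_left (a b c : A) :
    bstar (a * b) c = bstar a (bstar b c) + bstar b c + bstar a c := by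
  have h : a * (b * c) = a * b + a * c + a * bstar b c - a - a := by
    rw [mul_eq_add_add_bstar b c, add_assoc, mul_add_eq, mul_add_eq]
    abel
  rw [show bstar (a * b) c = a * b * c - a * b - c from rfl, mul_assoc, h,
    mul_eq_add_add_bstar a c, mul_eq_add_add_bstar a (bstar b c)]
  abel

theorem mem_zetaNat_one {s : A} : s ∈ zetaNat A 1 ↔ ∀ x, bstar s x = 0 ∧ bstar x s = 0 :=
  Iff.rfl

theorem bstar_left_eq_zero {s : A} (hs : s ∈ zetaNat A 1) (x : A) : bstar s x = 0 :=
  (hs x).1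

theorem bstar_right_eq_zero {s : A} (hs : s ∈ zetaNat A 1) (x : A) : bstar x s = 0 :=
  (hs x).2

theorem bstar_add_left_of_mem_zetaNat_one {s : A} (hs : s ∈ zetaNat A 1) (w x : A) :
    bstar (s + w) x = bstar w x := by
  have hsw : s + w = s * w := by rw [mul_eq_add_add_bstar, bstar_left_eq_zero hs, add_zero]
  rw [hsw, bstar_mul_left, bstar_left_eq_zero hs, bstar_left_eq_zero hs, zero_add, add_zero]

def zeta1 (A : Type u) [LeftBrace A] : AddSubgroup A where
  carrier := zetaNat A 1
  zero_mem' := mem_zetaNat_one.mpr fun x => ⟨bstar_zero_left x, bstar_zero_right x⟩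
  add_mem' {s t} hs ht := mem_zetaNat_one.mpr fun x =>
    ⟨by rw [bstar_add_left_of_mem_zetaNat_one hs, bstar_left_eq_zero ht],
      by rw [bstar_add_right, bstar_right_eq_zero hs, bstar_right_eq_zero ht, add_zero]⟩
  neg_mem' {s} hs := mem_zetaNat_one.mpr fun x => by
    refine ⟨?_, by rw [bstar_neg_right, bstar_right_eq_zero hs, neg_zero]⟩
    have h := bstar_add_left_of_mem_zetaNat_one hs (-s) x
    rwa [add_neg_cancel, bstar_zero_left, eq_comm] at h

theorem bstar_mem_zeta1_left {a : A} (ha : a ∈ zetaNat A 2) (x : A) : bstar a x ∈ zeta1 A :=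
  (ha x).1

theorem bstar_mem_zeta1_right {a : A} (ha : a ∈ zetaNat A 2) (x : A) : bstar x a ∈ zeta1 A :=
  (ha x).2

theorem mem_zetaNat_two_of_mem_zeta1 {s : A} (hs : s ∈ zeta1 A) : s ∈ zetaNat A 2 := fun x =>
  ⟨by rw [bstar_left_eq_zero hs]; exact zero_mem (zeta1 A),
    by rw [bstar_right_eq_zero hs]; exact zero_mem (zeta1 A)⟩

theorem bstar_add_left_of_mem_zetaNat_two {a b : A} (ha : a ∈ zetaNat A 2)
    (hb : b ∈ zetaNat A 2) (x : A) : bstar (a + b) x = bstar a x + bstar b x := by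
  have hab : a + b = -bstar a b + a * b := by
    rw [mul_eq_add_add_bstar]
    abel
  rw [hab, bstar_add_left_of_mem_zetaNat_one (neg_mem (bstar_mem_zeta1_left ha b)),
    bstar_mul_left, bstar_right_eq_zero (bstar_mem_zeta1_left hb x), zero_add, add_comm]

/-- Since `a * (-a) = -(a ⋆ a) ∈ ζ(⋆,A)`, expanding `(a * (-a)) ⋆ x` writes `(-a) ⋆ x` through
`a ⋆ x` and `a ⋆ ((-a) ⋆ x)`, both in `ζ(⋆,A)`. -/
theorem bstar_neg_left_of_mem_zetaNat_two {a : A} (ha : a ∈ zetaNat A 2) (x : A) :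
    bstar (-a) x = -bstar a x := by
  have hprod : a * -a = -bstar a a := by
    rw [mul_eq_add_add_bstar, bstar_neg_right]
    abel
  have h : bstar a (bstar (-a) x) + bstar (-a) x + bstar a x = 0 := by
    rw [← bstar_mul_left, hprod, bstar_left_eq_zero (neg_mem (bstar_mem_zeta1_left ha a))]
  have hmem : bstar (-a) x ∈ zeta1 A := by
    have hneg : bstar (-a) x = -(bstar a (bstar (-a) x) + bstar a x) :=
      eq_neg_of_add_eq_zero_left (by rw [← h]; abel)
    rw [hneg]
    exact neg_mem (add_mem (bstar_mem_zeta1_left ha _) (bstar_mem_zeta1_left ha x))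
  rw [bstar_right_eq_zero hmem, zero_add] at h
  exact eq_neg_of_add_eq_zero_left h

def zeta2 (A : Type u) [LeftBrace A] : AddSubgroup A where
  carrier := zetaNat A 2
  zero_mem' := mem_zetaNat_two_of_mem_zeta1 (zero_mem _)
  add_mem' {a b} ha hb x := by
    rw [bstar_add_left_of_mem_zetaNat_two ha hb, bstar_add_right]
    exact ⟨add_mem (bstar_mem_zeta1_left ha x) (bstar_mem_zeta1_left hb x),
      add_mem (bstar_mem_zeta1_right ha x) (bstar_mem_zeta1_right hb x)⟩
  neg_mem' {a} ha x := by
    rw [bstar_neg_left_of_mem_zetaNat_two ha, bstar_neg_right]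
    exact ⟨neg_mem (bstar_mem_zeta1_left ha x), neg_mem (bstar_mem_zeta1_right ha x)⟩

theorem zeta1_le_zeta2 : zeta1 A ≤ zeta2 A := fun _ => mem_zetaNat_two_of_mem_zeta1

def bstarHomZeta2 (x : A) : zeta2 A →+ A :=
  AddMonoidHom.mk' (fun a => bstar a x) fun a b => bstar_add_left_of_mem_zetaNat_two a.2 b.2 x

theorem bstar_zsmul_left {a : A} (ha : a ∈ zeta2 A) (m : ℤ) (x : A) :
    bstar (m • a) x = m • bstar a x :=
  map_zsmul (bstarHomZeta2 x) m ⟨a, ha⟩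

theorem isOfFinAddOrder_bstar_left {a : A} (ha : a ∈ zeta2 A) (hord : IsOfFinAddOrder a)
    (x : A) : IsOfFinAddOrder (bstar a x) :=
  (bstarHomZeta2 x).isOfFinAddOrder (x := ⟨a, ha⟩) (AddSubmonoid.isOfFinAddOrder_coe.mp hord)

theorem inv_eq_neg_add_bstar_self {a : A} (ha : a ∈ zeta2 A) : a⁻¹ = -a + bstar a a := by
  refine inv_eq_of_mul_eq_one_right ?_
  rw [mul_eq_add_add_bstar, bstar_add_right, bstar_neg_right,
    bstar_right_eq_zero (bstar_mem_zeta1_left ha a), one_eq_zero]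
  abel

theorem isSubbrace_coe (S : AddSubgroup A) (hmul : ∀ a ∈ S, ∀ b ∈ S, a * b ∈ S)
    (hinv : ∀ a ∈ S, a⁻¹ ∈ S) : IsSubbrace (S : Set A) :=
  ⟨S.zero_mem, S.add_mem, S.neg_mem, fun ha hb => hmul _ ha _ hb, fun ha => hinv _ ha⟩

section Cyclic

variable {z : A}

theorem bstar_zsmul_add_left (hz : z ∈ zeta2 A) (p : ℤ) {s : A} (hs : s ∈ zeta1 A) (v : A) :
    bstar (p • z + s) v = p • bstar z v := by
  rw [add_comm, bstar_add_left_of_mem_zetaNat_one hs, bstar_zsmul_left hz]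

theorem bstar_zsmul_add_right (v : A) (p : ℤ) {s : A} (hs : s ∈ zeta1 A) :
    bstar v (p • z + s) = p • bstar v z := by
  rw [bstar_add_right, bstar_right_eq_zero hs, add_zero, bstar_zsmul_right]

theorem zmultiples_sup_zeta1_le_zeta2 (hz : z ∈ zeta2 A) : zmultiples z ⊔ zeta1 A ≤ zeta2 A :=
  sup_le (zmultiples_le.mpr hz) zeta1_le_zeta2

theorem bstar_mem_zmultiples_of_mem_sup (hz : z ∈ zeta2 A) {u v : A}
    (hu : u ∈ zmultiples z ⊔ zeta1 A) (hv : v ∈ zmultiples z ⊔ zeta1 A) :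
    bstar u v ∈ zmultiples (bstar z z) := by
  obtain ⟨_, hpz, s, hs, rfl⟩ := mem_sup.mp hu
  obtain ⟨_, hqz, t, ht, rfl⟩ := mem_sup.mp hv
  obtain ⟨p, rfl⟩ := mem_zmultiples_iff.mp hpz
  obtain ⟨q, rfl⟩ := mem_zmultiples_iff.mp hqz
  rw [bstar_zsmul_add_left hz p hs, bstar_zsmul_add_right z q ht, ← mul_zsmul]
  exact zsmul_mem_zmultiples _ _

theorem isSubbrace_zmultiples_sup (hz : z ∈ zeta2 A) {S : AddSubgroup A} (hS : S ≤ zeta1 A)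
    (hzz : bstar z z ∈ S) : IsSubbrace ((zmultiples z ⊔ S : AddSubgroup A) : Set A) := by
  have hle : zmultiples z ⊔ S ≤ zmultiples z ⊔ zeta1 A := sup_le_sup_left hS _
  have hstar : ∀ u ∈ zmultiples z ⊔ S, ∀ v ∈ zmultiples z ⊔ S, bstar u v ∈ zmultiples z ⊔ S :=
    fun u hu v hv => mem_sup_right <| zmultiples_le.mpr hzz <|
      bstar_mem_zmultiples_of_mem_sup hz (hle hu) (hle hv)
  refine isSubbrace_coe _ (fun u hu v hv => ?_) fun u hu => ?_
  · rw [mul_eq_add_add_bstar]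
    exact add_mem (add_mem hu hv) (hstar u hu v hv)
  · rw [inv_eq_neg_add_bstar_self (zmultiples_sup_zeta1_le_zeta2 hz (hle hu))]
    exact add_mem (neg_mem hu) (hstar u hu u hu)

theorem isIdeal_zmultiples_sup_zeta1 (hz : z ∈ zeta2 A) :
    IsIdeal ((zmultiples z ⊔ zeta1 A : AddSubgroup A) : Set A) := by
  refine ⟨Set.subset_univ _, isSubbrace_zmultiples_sup hz le_rfl (bstar_mem_zeta1_left hz z),
    ⟨trivial, fun _ _ => trivial, fun _ => trivial, fun _ _ => trivial, fun _ => trivial⟩, ?_, ?_⟩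
  all_goals
    rintro x - v hv
    obtain ⟨_, hpz, s, hs, rfl⟩ := mem_sup.mp hv
    obtain ⟨p, rfl⟩ := mem_zmultiples_iff.mp hpz
  · rw [SetLike.mem_coe, bstar_zsmul_add_right x p hs]
    exact mem_sup_right (zsmul_mem (bstar_mem_zeta1_right hz x) p)
  · rw [SetLike.mem_coe, bstar_zsmul_add_left hz p hs]
    exact mem_sup_right (zsmul_mem (bstar_mem_zeta1_left hz x) p)

theorem isIdealIn_zmultiples_sup (hz : z ∈ zeta2 A) :
    IsIdealIn ((zmultiples z ⊔ zmultiples (bstar z z) : AddSubgroup A) : Set A)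
      ((zmultiples z ⊔ zeta1 A : AddSubgroup A) : Set A) := by
  have hzz : zmultiples (bstar z z) ≤ zeta1 A := zmultiples_le.mpr (bstar_mem_zeta1_left hz z)
  have hle := sup_le_sup_left hzz (zmultiples z)
  refine ⟨hle, isSubbrace_zmultiples_sup hz hzz (mem_zmultiples _),
    (isIdeal_zmultiples_sup_zeta1 hz).subbrace, ?_, ?_⟩
  · exact fun u hu v hv => mem_sup_right (bstar_mem_zmultiples_of_mem_sup hz hu (hle hv))
  · exact fun u hu v hv => mem_sup_right (bstar_mem_zmultiples_of_mem_sup hz (hle hv) hu)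

theorem bstar_mem_zmultiples_sup (hT : IsTBrace A) (hz : z ∈ zeta2 A) (x : A) :
    bstar x z ∈ zmultiples z ⊔ zmultiples (bstar z z) ∧
      bstar z x ∈ zmultiples z ⊔ zmultiples (bstar z z) := by
  have hI := hT _ _ (isIdealIn_zmultiples_sup hz) (isIdeal_zmultiples_sup_zeta1 hz)
  have hzI : z ∈ zmultiples z ⊔ zmultiples (bstar z z) := mem_sup_left (mem_zmultiples z)
  exact ⟨hI.star_mem_left x trivial z hzI, hI.star_mem_right x trivial z hzI⟩

theorem bstar_mem_zmultiples_bstar_self (hT : IsTBrace A) (hz : z ∈ zeta2 A)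
    (hzq : ¬IsOfFinAddOrder (z : A ⧸ zeta1 A)) (x : A) :
    bstar x z ∈ zmultiples (bstar z z) ∧ bstar z x ∈ zmultiples (bstar z z) := by
  obtain ⟨hxz, hzx⟩ := bstar_mem_zmultiples_sup hT hz x
  have hzz := bstar_mem_zeta1_left hz z
  exact ⟨mem_zmultiples_of_mem_sup_zmultiples hzq hzz (bstar_mem_zeta1_right hz x) hxz,
    mem_zmultiples_of_mem_sup_zmultiples hzq hzz (bstar_mem_zeta1_left hz x) hzx⟩

/-- If `N • (z ⋆ z) = 0` with `N ≠ 0`, then `w = N • z` has `w ⋆ w = 0`, so every `⋆`-product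
with `w` vanishes and `w ∈ ζ(⋆,A)`. -/
theorem not_isOfFinAddOrder_bstar_self (hT : IsTBrace A) (hz : z ∈ zeta2 A)
    (hzq : ¬IsOfFinAddOrder (z : A ⧸ zeta1 A)) : ¬IsOfFinAddOrder (bstar z z) := by
  intro hfin
  obtain ⟨N, hN, hNzz⟩ := isOfFinAddOrder_iff_zsmul_eq_zero.mp hfin
  have hw : N • z ∈ zeta2 A := zsmul_mem hz N
  have hwq : ¬IsOfFinAddOrder ((N • z : A) : A ⧸ zeta1 A) := by
    rw [QuotientAddGroup.mk_zsmul]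
    exact fun h => hzq (h.of_zsmul hN)
  have hww : bstar (N • z) (N • z) = 0 := by
    rw [bstar_zsmul_left hz, bstar_zsmul_right, hNzz, zsmul_zero]
  have hw1 : N • z ∈ zeta1 A := mem_zetaNat_one.mpr fun x => by
    have h := bstar_mem_zmultiples_bstar_self hT hw hwq x
    rw [hww, zmultiples_zero_eq_bot, mem_bot, mem_bot] at h
    exact h.symm
  exact hN (QuotientAddGroup.eq_zero_of_zsmul_mem hzq hw1)

end Cyclic

section TorsionElement

variable {a : A}

theorem bstar_mem_zmultiples_bstar_self_of_zeta1 (hT : IsTBrace A) (ha : a ∈ zeta2 A)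
    (hord : IsOfFinAddOrder a) {s : A} (hs : s ∈ zeta1 A) (hs_inf : ¬IsOfFinAddOrder s)
    (x : A) : bstar x a ∈ zmultiples (bstar a a) ∧ bstar a x ∈ zmultiples (bstar a a) := by
  have hleft : ∀ y, bstar (s + a) y = bstar a y := bstar_add_left_of_mem_zetaNat_one hs a
  have hright : ∀ y, bstar y (s + a) = bstar y a := fun y => by
    rw [bstar_add_right, bstar_right_eq_zero hs, zero_add]
  have hz_inf : ¬IsOfFinAddOrder (s + a) := fun h => hs_inf (by simpa using h.add hord.neg)
  obtain ⟨hxz, hzx⟩ := bstar_mem_zmultiples_sup hT (add_mem (zeta1_le_zeta2 hs) ha) x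
  simp only [hleft, hright] at hxz hzx
  have haa := isOfFinAddOrder_bstar_right hord a
  exact ⟨mem_zmultiples_of_mem_sup_zmultiples (not_isOfFinAddOrder_mk_torsion hz_inf) haa
      (isOfFinAddOrder_bstar_right hord x) hxz,
    mem_zmultiples_of_mem_sup_zmultiples (not_isOfFinAddOrder_mk_torsion hz_inf) haa
      (isOfFinAddOrder_bstar_left ha hord x) hzx⟩

theorem bstar_mem_zmultiples_bstar_self_of_zeta2 (hT : IsTBrace A) (ha : a ∈ zeta2 A)
    (hord : IsOfFinAddOrder a) {b : A} (hb : b ∈ zeta2 A)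
    (hbq : ¬IsOfFinAddOrder (b : A ⧸ zeta1 A)) (x : A) :
    bstar x a ∈ zmultiples (bstar a a) ∧ bstar a x ∈ zmultiples (bstar a a) := by
  have hbb := not_isOfFinAddOrder_bstar_self hT hb hbq
  have hab : bstar a b = 0 := (isOfFinAddOrder_bstar_left ha hord b).eq_zero_of_mem_zmultiples
    hbb (bstar_mem_zmultiples_bstar_self hT hb hbq a).1
  have hba : bstar b a = 0 := (isOfFinAddOrder_bstar_right hord b).eq_zero_of_mem_zmultiples
    hbb (bstar_mem_zmultiples_bstar_self hT hb hbq a).2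
  have hcc : bstar (a + b) (a + b) = bstar a a + bstar b b := by
    rw [bstar_add_left_of_mem_zetaNat_two ha hb, bstar_add_right, bstar_add_right, hab, hba,
      add_zero, zero_add]
  have hcq : ¬IsOfFinAddOrder ((a + b : A) : A ⧸ zeta1 A) := fun h =>
    hbq (by simpa using h.add ((QuotientAddGroup.mk' (zeta1 A)).isOfFinAddOrder hord).neg)
  obtain ⟨hxc, hcx⟩ := bstar_mem_zmultiples_bstar_self hT (add_mem ha hb) hcq x
  obtain ⟨hxb, hbx⟩ := bstar_mem_zmultiples_bstar_self hT hb hbq x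
  rw [hcc] at hxc hcx
  have haa := isOfFinAddOrder_bstar_right hord a
  exact ⟨mem_zmultiples_of_add_mem_zmultiples_add haa hbb (isOfFinAddOrder_bstar_right hord x)
      hxb (by rwa [← bstar_add_right]),
    mem_zmultiples_of_add_mem_zmultiples_add haa hbb (isOfFinAddOrder_bstar_left ha hord x)
      hbx (by rwa [← bstar_add_left_of_mem_zetaNat_two ha hb])⟩

end TorsionElement

end LeftBrace

open LeftBrace in
/-- **Lemma.** Let `A` be a T-brace and `a ∈ ζ₂(⋆,A)` of finite additive order.  If the
additive group of `ζ₂(⋆,A)` is not periodic, then `x ⋆ a, a ⋆ x ∈ ⟨a ⋆ a⟩` for all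
`x ∈ A`. -/
theorem bstar_mem_zmultiples_of_finite_order
    {A : Type u} [LeftBrace A] (hT : IsTBrace A) (a : A) (ha : a ∈ zetaNat A 2)
    (hord : IsOfFinAddOrder a)
    (hnp : ¬ ∀ x ∈ zetaNat A 2, IsOfFinAddOrder x) :
    ∀ x : A, bstar x a ∈ AddSubgroup.zmultiples (bstar a a) ∧
      bstar a x ∈ AddSubgroup.zmultiples (bstar a a) := by
  obtain ⟨b, hb, hb_inf⟩ : ∃ b ∈ zetaNat A 2, ¬IsOfFinAddOrder b := by simpa using hnp
  by_cases hbq : IsOfFinAddOrder (b : A ⧸ zeta1 A)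
  · obtain ⟨n, hn, hnb⟩ := isOfFinAddOrder_iff_zsmul_eq_zero.mp hbq
    rw [← QuotientAddGroup.mk_zsmul, QuotientAddGroup.eq_zero_iff] at hnb
    exact bstar_mem_zmultiples_bstar_self_of_zeta1 hT ha hord hnb (fun h => hb_inf (h.of_zsmul hn))
  · exact bstar_mem_zmultiples_bstar_self_of_zeta2 hT ha hord hb hbq
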